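/- arXiv:1304.1246 — 4 statements merged into one kernel-verified Lean document; each statement's English description precedes it below -/
import Mathlib

section
/- Let G act by isometries on a δ-hyperbolic geodesic metric space S. Suppose that for every ε > 0 there exist R, N > 0 such that for every two points x, z ∈ S with d(x,z) = R, the set {g ∈ G : max{d(x,gx), d(z,gz)} ≤ ε} has at most N elements. Then the action of G on S is acylindrical, i.e., for every ε > 0 there exist R, N > 0 such that for all x, y ∈ S with d(x,y) ≥ R, the set {g ∈ G : d(x,gx) ≤ ε and d(y,gy) ≤ ε} has at most N elements. -/
open Bornology

/-- A geodesic segment from `x` to `y`, parametrized by arc length on `[0, dist x y]`. -/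
def IsGeodesicSeg {S : Type*} [MetricSpace S] (f : ℝ → S) (x y : S) : Prop :=
  f 0 = x ∧ f (dist x y) = y ∧
    ∀ s ∈ Set.Icc (0:ℝ) (dist x y), ∀ t ∈ Set.Icc (0:ℝ) (dist x y),
      dist (f s) (f t) = |s - t|

/-- A metric space is geodesic if any two points are joined by a geodesic segment. -/
def GeodesicMetricSpace (S : Type*) [MetricSpace S] : Prop :=
  ∀ x y : S, ∃ f : ℝ → S, IsGeodesicSeg f x y

/-- Rips condition: every side of a geodesic triangle lies in the union of the
δ-neighbourhoods of the other two sides. -/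
def RipsHyperbolic (S : Type*) [MetricSpace S] (δ : ℝ) : Prop :=
  ∀ (x y z : S) (f g h : ℝ → S), IsGeodesicSeg f x y → IsGeodesicSeg g y z →
    IsGeodesicSeg h x z →
    ∀ s ∈ Set.Icc (0:ℝ) (dist x y),
      (∃ t ∈ Set.Icc (0:ℝ) (dist y z), dist (f s) (g t) ≤ δ) ∨
      (∃ t ∈ Set.Icc (0:ℝ) (dist x z), dist (f s) (h t) ≤ δ)

/-- The Gromov product `(x,y)_t`. -/
noncomputable def gromov {S : Type*} [MetricSpace S] (x y t : S) : ℝ :=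
  (dist x t + dist y t - dist x y) / 2

/-- Acylindricity of an isometric action of `G` on `S`. -/
def AcylindricalAction (G S : Type*) [Group G] [MetricSpace S] [MulAction G S] : Prop :=
  ∀ ε : ℝ, 0 < ε → ∃ R : ℝ, ∃ N : ℕ, 0 < R ∧
    ∀ x y : S, dist x y ≥ R →
      {g : G | dist x (g • x) ≤ ε ∧ dist y (g • y) ≤ ε}.Finite ∧
      {g : G | dist x (g • x) ≤ ε ∧ dist y (g • y) ≤ ε}.ncard ≤ N

/-- `g` is loxodromic: some orbit map `n ↦ gⁿ • s` is a quasi-isometric embedding of ℤ. -/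
def Loxodromic {G S : Type*} [Group G] [MetricSpace S] [MulAction G S] (g : G) : Prop :=
  ∃ s : S, ∃ lam C : ℝ, 1 ≤ lam ∧ 0 ≤ C ∧ ∀ m n : ℤ,
    lam⁻¹ * |(m : ℝ) - (n : ℝ)| - C ≤ dist ((g ^ m) • s) ((g ^ n) • s) ∧
    dist ((g ^ m) • s) ((g ^ n) • s) ≤ lam * |(m : ℝ) - (n : ℝ)| + C

/-!
Let `p` be the point at distance `R` from `x` on a geodesic `[x, y]`. If `g` moves `x` and `y`
by at most `ε`, then thinness of the triangles `(x, y, g y)` and `(x, g y, g x)` puts `p` within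
`2δ` of the translate `g [x, y]`, or within `2δ + ε` of `x` or `y`; either way `g` moves `p` by at
most `4δ + 3ε`. So the elements moving `x, y` by `ε` are among those moving `x, p` by `4δ + 3ε`,
and `dist x p = R`.
-/

open Set

namespace IsGeodesicSeg

variable {S : Type*} [MetricSpace S] {f : ℝ → S} {x y : S}

theorem dist_left (hf : IsGeodesicSeg f x y) {t : ℝ} (ht : t ∈ Icc 0 (dist x y)) :
    dist x (f t) = t := by
  obtain ⟨hf0, -, hfd⟩ := hf
  rw [← hf0, hfd 0 ⟨le_rfl, dist_nonneg⟩ t ht, zero_sub, abs_neg, abs_of_nonneg ht.1]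

theorem reverse (hf : IsGeodesicSeg f x y) :
    IsGeodesicSeg (fun t => f (dist x y - t)) y x := by
  obtain ⟨hf0, hfD, hfd⟩ := hf
  refine ⟨by simpa using hfD, by simpa [dist_comm y x] using hf0, fun s hs t ht => ?_⟩
  rw [dist_comm y x] at hs ht
  rw [hfd _ ⟨by linarith [hs.2], by linarith [hs.1]⟩ _ ⟨by linarith [ht.2], by linarith [ht.1]⟩,
    abs_sub_comm]
  ring_nf

theorem smul {G : Type*} [SMul G S] [IsIsometricSMul G S] (hf : IsGeodesicSeg f x y) (g : G) :
    IsGeodesicSeg (fun t => g • f t) (g • x) (g • y) := by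
  obtain ⟨hf0, hfD, hfd⟩ := hf
  refine ⟨by simp [hf0], by simp [dist_smul, hfD], fun s hs t ht => ?_⟩
  rw [dist_smul] at hs ht ⊢
  exact hfd s hs t ht

theorem dist_le_add_of_dist_le (hf : IsGeodesicSeg f x y) {t : ℝ} (ht : t ∈ Icc 0 (dist x y))
    {p : S} {r : ℝ} (hp : dist p (f t) ≤ r) : dist p x ≤ r + dist x y :=
  calc dist p x ≤ dist p (f t) + dist (f t) x := dist_triangle _ _ _
    _ ≤ r + dist x y := add_le_add hp (by rw [dist_comm, hf.dist_left ht]; exact ht.2)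

/-- The parameters `s`, `t` differ by at most `r + ε`, as `t = dist (g • x) (g • f t)` and
`s = dist x (f s)`. -/
theorem dist_smul_self_le_of_dist_smul_le {G : Type*} [SMul G S] [IsIsometricSMul G S]
    (hf : IsGeodesicSeg f x y) {s t : ℝ} (hs : s ∈ Icc 0 (dist x y)) (ht : t ∈ Icc 0 (dist x y))
    {g : G} {r ε : ℝ} (hst : dist (f s) (g • f t) ≤ r) (hx : dist x (g • x) ≤ ε) :
    dist (f s) (g • f s) ≤ 2 * r + ε := by
  have hgt : dist (g • x) (g • f t) = t := by rw [dist_smul, hf.dist_left ht]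
  have hxs := hf.dist_left hs
  have hts : |t - s| ≤ r + ε := by
    have h₁ := dist_triangle4 (g • x) x (f s) (g • f t)
    have h₂ := dist_triangle4 x (g • x) (g • f t) (f s)
    rw [dist_comm (g • x) x] at h₁
    rw [dist_comm (g • f t) (f s)] at h₂
    rw [abs_sub_le_iff]
    constructor <;> linarith
  calc dist (f s) (g • f s) ≤ dist (f s) (g • f t) + dist (g • f t) (g • f s) := dist_triangle _ _ _
    _ = dist (f s) (g • f t) + |t - s| := by rw [dist_smul, hf.2.2 t ht s hs]
    _ ≤ 2 * r + ε := by linarith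

end IsGeodesicSeg

theorem dist_smul_self_le_of_dist_le {G S : Type*} [MetricSpace S] [SMul G S]
    [IsIsometricSMul G S] {p q : S} {g : G} {r ε : ℝ} (hpq : dist p q ≤ r)
    (hq : dist q (g • q) ≤ ε) : dist p (g • p) ≤ 2 * r + ε :=
  calc dist p (g • p) ≤ dist p q + dist q (g • q) + dist (g • q) (g • p) := dist_triangle4 _ _ _ _
    _ ≤ 2 * r + ε := by rw [dist_smul, dist_comm q p]; linarith

theorem RipsHyperbolic.dist_smul_self_le_of_mem_geodesic {G S : Type*} [MetricSpace S] [SMul G S]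
    [IsIsometricSMul G S] {δ : ℝ} (hhyp : RipsHyperbolic S δ) (hδ : 0 ≤ δ)
    (hgeo : GeodesicMetricSpace S) {f : ℝ → S} {x y : S} (hf : IsGeodesicSeg f x y) {s : ℝ}
    (hs : s ∈ Icc 0 (dist x y)) {g : G} {ε : ℝ} (hx : dist x (g • x) ≤ ε)
    (hy : dist y (g • y) ≤ ε) : dist (f s) (g • f s) ≤ 4 * δ + 3 * ε := by
  have hε : 0 ≤ ε := dist_nonneg.trans hx
  obtain ⟨m, hm⟩ := hgeo y (g • y)
  obtain ⟨k, hk⟩ := hgeo x (g • y)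
  obtain ⟨l, hl⟩ := hgeo x (g • x)
  rcases hhyp x y (g • y) f m k hf hm hk s hs with ⟨t, ht, hfm⟩ | ⟨t, ht, hfk⟩
  · have hsy := hm.dist_le_add_of_dist_le ht hfm
    have := dist_smul_self_le_of_dist_le hsy hy
    linarith
  rcases hhyp x (g • y) (g • x) k _ l hk (hf.reverse.smul g) hl t ht with
    ⟨u, hu, hkf⟩ | ⟨u, hu, hkl⟩
  · rw [dist_smul, dist_comm] at hu
    have hu' : dist x y - u ∈ Icc 0 (dist x y) := ⟨by linarith [hu.2], by linarith [hu.1]⟩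
    have hnear : dist (f s) (g • f (dist x y - u)) ≤ 2 * δ :=
      (dist_triangle _ _ _).trans (by linarith)
    have := hf.dist_smul_self_le_of_dist_smul_le hs hu' hnear hx
    linarith
  · have hkx := hl.dist_le_add_of_dist_le hu hkl
    have hsx : dist (f s) x ≤ 2 * δ + ε := (dist_triangle _ (k t) _).trans (by linarith)
    have := dist_smul_self_le_of_dist_le hsx hx
    linarith

theorem stmt_3 {G S : Type*} [Group G] [MetricSpace S] [MulAction G S]
    [IsIsometricSMul G S] (δ : ℝ) (hδ : 0 ≤ δ)
    (hgeo : GeodesicMetricSpace S) (hhyp : RipsHyperbolic S δ)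
    (h : ∀ ε : ℝ, 0 < ε → ∃ R : ℝ, ∃ N : ℕ, 0 < R ∧
      ∀ x z : S, dist x z = R →
        {g : G | dist x (g • x) ≤ ε ∧ dist z (g • z) ≤ ε}.Finite ∧
        {g : G | dist x (g • x) ≤ ε ∧ dist z (g • z) ≤ ε}.ncard ≤ N) :
    AcylindricalAction G S := by
  intro ε hε
  obtain ⟨R, N, hR, hN⟩ := h (4 * δ + 3 * ε) (by positivity)
  refine ⟨R, N, hR, fun x y hxy => ?_⟩
  obtain ⟨f, hf⟩ := hgeo x y
  have hRmem : R ∈ Icc 0 (dist x y) := ⟨hR.le, hxy⟩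
  obtain ⟨hfin, hcard⟩ := hN x (f R) (hf.dist_left hRmem)
  have hsub : {g : G | dist x (g • x) ≤ ε ∧ dist y (g • y) ≤ ε} ⊆
      {g : G | dist x (g • x) ≤ 4 * δ + 3 * ε ∧ dist (f R) (g • f R) ≤ 4 * δ + 3 * ε} :=
    fun g ⟨hgx, hgy⟩ =>
      ⟨by linarith, hhyp.dist_smul_self_le_of_mem_geodesic hδ hgeo hf hRmem hgx hgy⟩
  exact ⟨hfin.subset hsub, (Set.ncard_le_ncard hsub hfin).trans hcard⟩
end

section
/- Let G be a group with a finite symmetric generating set X, and let 𝓗(G) be the combinatorial horoball over the Cayley graph Γ(G,X): its vertex set is G × ℕ (including 0), with an edge between (u,k) and (v,k) whenever 0 < d_X(u,v) ≤ 2^k, and an edge between (v,k) and (v,k+1) for all v, k. Then the natural action of G on 𝓗(G) (by g·(v,k) = (gv,k)) is proper (vertex stabilizers of pairs at bounded distance are finite; in fact for every vertex s and every ε > 0 the set {g ∈ G : d(s, gs) ≤ ε} is finite), and if G is infinite the action is not acylindrical. -/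
/-!
An edge of the horoball at level `k` moves the `G`-coordinate by at most `2 ^ k` in the word
metric, and a walk of length `ε` from level `k` stays below level `k + ε`. So an element moving
a vertex `(v, k)` by at most `ε` is `ε * 2 ^ (k + ε)`-close to `1` after conjugation by `v`, and
word balls are finite: the action is proper.

For acylindricity with `ε = 1` and any `R, N`, take the vertices `(1, N)` and `(1, N + R)`: they
are at least `R` apart, since edges change the level by at most one, but every element of the word
ball of radius `2 ^ N` moves both by at most one, and in an infinite group that ball has more
than `2 ^ N > N` elements.
-/

/-- The element u⁻¹v is a product of at most n elements of X
(i.e. the word distance from u to v with respect to X is at most n). -/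
def wordLe {G : Type*} [Group G] (X : Set G) (u v : G) (n : ℕ) : Prop :=
  ∃ l : List G, (∀ a ∈ l, a ∈ X) ∧ l.prod = u⁻¹ * v ∧ l.length ≤ n

/-- The combinatorial horoball over the Cayley graph of G with respect to X:
vertices are pairs (v,k) with v ∈ G, k ∈ ℕ; two vertices on the same level k
are adjacent iff their word distance is positive and at most 2^k, and (v,k) is
adjacent to (v,k+1). -/
def horoball {G : Type*} [Group G] (X : Set G) : SimpleGraph (G × ℕ) where
  Adj p q := p ≠ q ∧
    ((p.2 = q.2 ∧ (wordLe X p.1 q.1 (2 ^ p.2) ∨ wordLe X q.1 p.1 (2 ^ q.2))) ∨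
     (p.1 = q.1 ∧ (p.2 = q.2 + 1 ∨ q.2 = p.2 + 1)))
  symm := ⟨by
    intro p q h
    refine ⟨Ne.symm h.1, ?_⟩
    rcases h.2 with ⟨h1, h2⟩ | ⟨h1, h2⟩
    · refine Or.inl ⟨h1.symm, ?_⟩
      rw [h1] at h2 ⊢
      exact h2.symm
    · exact Or.inr ⟨h1.symm, h2.symm⟩⟩
  loopless := ⟨fun p h => h.1 rfl⟩

section WordMetric

variable {G : Type*} [Group G] {X : Set G}

theorem wordLe.refl (u : G) : wordLe X u u 0 :=
  ⟨[], by simp, by simp, le_rfl⟩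

theorem wordLe.mono {u v : G} {m n : ℕ} (h : wordLe X u v m) (hmn : m ≤ n) : wordLe X u v n :=
  let ⟨l, hX, hprod, hlen⟩ := h
  ⟨l, hX, hprod, hlen.trans hmn⟩

theorem wordLe.trans {u v w : G} {m n : ℕ} (huv : wordLe X u v m) (hvw : wordLe X v w n) :
    wordLe X u w (m + n) := by
  obtain ⟨l₁, hX₁, hprod₁, hlen₁⟩ := huv
  obtain ⟨l₂, hX₂, hprod₂, hlen₂⟩ := hvw
  refine ⟨l₁ ++ l₂, by simpa [or_imp, forall_and] using ⟨hX₁, hX₂⟩, ?_, by simp; omega⟩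
  rw [List.prod_append, hprod₁, hprod₂]
  group

theorem wordLe.exists_split {u v : G} {m n : ℕ} (h : wordLe X u v (m + n)) :
    ∃ w, wordLe X u w m ∧ wordLe X w v n := by
  obtain ⟨l, hX, hprod, hlen⟩ := h
  rw [← List.prod_take_mul_prod_drop l m] at hprod
  refine ⟨u * (l.take m).prod,
    ⟨l.take m, fun a ha => hX a (List.mem_of_mem_take ha), by group, by simp⟩,
    ⟨l.drop m, fun a ha => hX a (List.mem_of_mem_drop ha), ?_, by simp; omega⟩⟩
  rw [mul_inv_rev, mul_assoc, ← hprod]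
  group

theorem wordLe.symm (hsym : ∀ x ∈ X, x⁻¹ ∈ X) {u v : G} {n : ℕ} (h : wordLe X u v n) :
    wordLe X v u n := by
  obtain ⟨l, hX, hprod, hlen⟩ := h
  refine ⟨(l.map (·⁻¹)).reverse, fun a ha => ?_, ?_, by simpa⟩
  · rw [← inv_inv a]
    exact hsym _ (hX _ (by simpa using ha))
  · rw [← List.prod_inv_reverse, hprod]
    group

def wordBall (X : Set G) (n : ℕ) : Set G := {g | wordLe X 1 g n}

theorem wordLe_iff_inv_mul_mem_wordBall {u v : G} {n : ℕ} :
    wordLe X u v n ↔ u⁻¹ * v ∈ wordBall X n := by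
  constructor <;> rintro ⟨l, hX, hprod, hlen⟩ <;> exact ⟨l, hX, by rw [hprod]; group, hlen⟩

theorem one_mem_wordBall (n : ℕ) : (1 : G) ∈ wordBall X n :=
  (wordLe.refl 1).mono n.zero_le

theorem wordBall_mono {m n : ℕ} (h : m ≤ n) : wordBall X m ⊆ wordBall X n :=
  fun _ hg => wordLe.mono hg h

theorem wordBall_finite (hfin : X.Finite) (n : ℕ) : (wordBall X n).Finite := by
  have := hfin.to_subtype
  refine ((List.finite_length_le X n).image fun l => (l.map (↑)).prod).subset ?_
  rintro g ⟨l, hX, hprod, hlen⟩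
  lift l to List X using hX
  exact ⟨l, by simpa using hlen, by simpa using hprod⟩

theorem exists_mem_wordBall (hsym : ∀ x ∈ X, x⁻¹ ∈ X) (hgen : Subgroup.closure X = ⊤) (g : G) :
    ∃ n, g ∈ wordBall X n := by
  have hXinv : X ∪ X⁻¹ = X := Set.union_eq_left.mpr fun x hx => by simpa using hsym _ hx
  have hg : g ∈ Submonoid.closure X := by
    rw [← hXinv, ← Subgroup.closure_toSubmonoid, hgen]
    trivial
  obtain ⟨l, hX, hprod⟩ := Submonoid.exists_list_of_mem_closure hg
  exact ⟨l.length, l, hX, by simpa using hprod, le_rfl⟩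

/-- If the ball of radius `n + 1` were no larger than that of radius `n`, then all balls would
coincide with it, and `G` would be finite. -/
theorem wordBall_ssubset_succ [Infinite G] (hfin : X.Finite) (hsym : ∀ x ∈ X, x⁻¹ ∈ X)
    (hgen : Subgroup.closure X = ⊤) (n : ℕ) : wordBall X n ⊂ wordBall X (n + 1) := by
  refine ⟨wordBall_mono n.le_succ, fun hstable => Set.infinite_univ (α := G) ?_⟩
  have hall : ∀ k, wordBall X (n + k) ⊆ wordBall X n := by
    intro k
    induction k with
    | zero => exact le_rfl
    | succ k ih =>
      intro g hg
      obtain ⟨w, hw, hwg⟩ := wordLe.exists_split (m := k) (n := n + 1) (by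
        simpa [wordBall, Nat.add_comm, Nat.add_left_comm] using hg)
      have hwg' : wordLe X w g n :=
        wordLe_iff_inv_mul_mem_wordBall.mpr (hstable (wordLe_iff_inv_mul_mem_wordBall.mp hwg))
      exact ih (by simpa [wordBall, Nat.add_comm] using hw.trans hwg')
  refine (wordBall_finite hfin n).subset fun g _ => ?_
  obtain ⟨k, hk⟩ := exists_mem_wordBall hsym hgen g
  exact hall k (wordBall_mono (Nat.le_add_left k n) hk)

theorem add_one_le_ncard_wordBall [Infinite G] (hfin : X.Finite) (hsym : ∀ x ∈ X, x⁻¹ ∈ X)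
    (hgen : Subgroup.closure X = ⊤) (n : ℕ) : n + 1 ≤ (wordBall X n).ncard := by
  induction n with
  | zero => exact (Set.ncard_pos (wordBall_finite hfin 0)).mpr ⟨1, one_mem_wordBall 0⟩
  | succ n ih =>
    have := Set.ncard_lt_ncard (wordBall_ssubset_succ hfin hsym hgen n) (wordBall_finite hfin _)
    omega

end WordMetric

section Horoball

variable {G : Type*} [Group G] {X : Set G}

theorem horoball_adj_snd_le {p q : G × ℕ} (h : (horoball X).Adj p q) : q.2 ≤ p.2 + 1 := by
  rcases h.2 with ⟨_, _⟩ | ⟨_, _ | _⟩ <;> omega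

theorem horoball_adj_wordLe (hsym : ∀ x ∈ X, x⁻¹ ∈ X) {p q : G × ℕ}
    (h : (horoball X).Adj p q) : wordLe X p.1 q.1 (2 ^ max p.2 q.2) := by
  rcases h.2 with ⟨_, hpq | hqp⟩ | ⟨hpq, _⟩
  · exact hpq.mono (Nat.pow_le_pow_right two_pos (le_max_left _ _))
  · exact (hqp.symm hsym).mono (Nat.pow_le_pow_right two_pos (le_max_right _ _))
  · exact hpq ▸ (wordLe.refl _).mono (Nat.zero_le _)

theorem horoball_walk_snd_le {a b : G × ℕ} (p : (horoball X).Walk a b) :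
    b.2 ≤ a.2 + p.length := by
  induction p with
  | nil => simp
  | cons h _ ih =>
    have := horoball_adj_snd_le h
    simp only [SimpleGraph.Walk.length_cons]
    omega

theorem horoball_walk_wordLe (hsym : ∀ x ∈ X, x⁻¹ ∈ X) {a b : G × ℕ}
    (p : (horoball X).Walk a b) : wordLe X a.1 b.1 (p.length * 2 ^ (a.2 + p.length)) := by
  induction p with
  | nil => exact (wordLe.refl _).mono (Nat.zero_le _)
  | @cons a c b h q ih =>
    have hc := horoball_adj_snd_le h
    refine ((horoball_adj_wordLe hsym h).trans ih).mono ?_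
    have hedge : 2 ^ max a.2 c.2 ≤ 2 ^ (a.2 + (q.length + 1)) :=
      Nat.pow_le_pow_right two_pos (by omega)
    have hrest : 2 ^ (c.2 + q.length) ≤ 2 ^ (a.2 + (q.length + 1)) :=
      Nat.pow_le_pow_right two_pos (by omega)
    rw [SimpleGraph.Walk.length_cons, Nat.succ_mul]
    nlinarith

theorem horoball_reachable_of_fst_eq (u : G) (j k : ℕ) :
    (horoball X).Reachable (u, j) (u, k) := by
  have hup : ∀ j m : ℕ, (horoball X).Reachable (u, j) (u, j + m) := fun j m => by
    induction m with
    | zero => rfl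
    | succ m ih => exact ih.trans (SimpleGraph.Adj.reachable ⟨by simp, Or.inr ⟨rfl, Or.inr rfl⟩⟩)
  rcases le_total j k with h | h
  · obtain ⟨m, rfl⟩ := Nat.exists_eq_add_of_le h
    exact hup j m
  · obtain ⟨m, rfl⟩ := Nat.exists_eq_add_of_le h
    exact (hup k m).symm

theorem horoball_connected (hsym : ∀ x ∈ X, x⁻¹ ∈ X) (hgen : Subgroup.closure X = ⊤) :
    (horoball X).Connected := by
  refine (SimpleGraph.connected_iff _).mpr ⟨fun ⟨u, j⟩ ⟨v, k⟩ => ?_, ⟨(1, 0)⟩⟩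
  obtain ⟨n, hn⟩ := exists_mem_wordBall hsym hgen (u⁻¹ * v)
  have hcross : (horoball X).Reachable (u, n) (v, n) := by
    by_cases huv : u = v
    · rw [huv]
    · refine SimpleGraph.Adj.reachable ⟨by simp [huv], Or.inl ⟨rfl, Or.inl ?_⟩⟩
      exact (wordLe_iff_inv_mul_mem_wordBall.mpr hn).mono n.lt_two_pow_self.le
  exact ((horoball_reachable_of_fst_eq u j n).trans hcross).trans
    (horoball_reachable_of_fst_eq v n k)

theorem horoball_snd_le_add_dist (hconn : (horoball X).Connected) (a b : G × ℕ) :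
    b.2 ≤ a.2 + (horoball X).dist a b := by
  obtain ⟨p, hp⟩ := hconn.exists_walk_length_eq_dist a b
  exact hp ▸ horoball_walk_snd_le p

theorem horoball_wordLe_of_dist_le (hsym : ∀ x ∈ X, x⁻¹ ∈ X) (hconn : (horoball X).Connected)
    {a b : G × ℕ} {ε : ℕ} (h : (horoball X).dist a b ≤ ε) :
    wordLe X a.1 b.1 (ε * 2 ^ (a.2 + ε)) := by
  obtain ⟨p, hp⟩ := hconn.exists_walk_length_eq_dist a b
  exact (horoball_walk_wordLe hsym p).mono
    (Nat.mul_le_mul (hp ▸ h) (Nat.pow_le_pow_right two_pos (by omega)))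

theorem horoball_dist_le_one {u v : G} {j k : ℕ} (h : wordLe X u v (2 ^ j)) (hjk : j ≤ k) :
    (horoball X).dist (u, k) (v, k) ≤ 1 := by
  by_cases huv : u = v
  · simp [huv]
  · have hadj : (horoball X).Adj (u, k) (v, k) :=
      ⟨by simp [huv], Or.inl ⟨rfl, Or.inl (h.mono (Nat.pow_le_pow_right two_pos hjk))⟩⟩
    exact (SimpleGraph.dist_eq_one_iff_adj.mpr hadj).le

theorem horoball_setOf_dist_le_finite (hfin : X.Finite) (hsym : ∀ x ∈ X, x⁻¹ ∈ X)
    (hgen : Subgroup.closure X = ⊤) (s : G × ℕ) (ε : ℕ) :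
    {g : G | (horoball X).dist s (g * s.1, s.2) ≤ ε}.Finite := by
  refine ((wordBall_finite hfin (ε * 2 ^ (s.2 + ε))).preimage
    ((mul_right_injective s.1⁻¹).comp (mul_left_injective s.1)).injOn).subset fun g hg => ?_
  exact wordLe_iff_inv_mul_mem_wordBall.mp
    (horoball_wordLe_of_dist_le hsym (horoball_connected hsym hgen) hg)

end Horoball

theorem stmt_11 {G : Type*} [Group G] (X : Set G) (hfin : X.Finite)
    (hsym : ∀ x ∈ X, x⁻¹ ∈ X) (hgen : Subgroup.closure X = ⊤) :
    -- the natural action of G on the horoball is proper: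
    (∀ s : G × ℕ, ∀ ε : ℕ,
      {g : G | (horoball X).dist s (g * s.1, s.2) ≤ ε}.Finite) ∧
    -- but if G is infinite, it is not acylindrical:
    (Infinite G →
      ¬ ∀ ε : ℕ, ∃ R N : ℕ, ∀ x y : G × ℕ, R ≤ (horoball X).dist x y →
        {g : G | (horoball X).dist x (g * x.1, x.2) ≤ ε ∧
                 (horoball X).dist y (g * y.1, y.2) ≤ ε}.Finite ∧
        {g : G | (horoball X).dist x (g * x.1, x.2) ≤ ε ∧
                 (horoball X).dist y (g * y.1, y.2) ≤ ε}.ncard ≤ N) := by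
  refine ⟨horoball_setOf_dist_le_finite hfin hsym hgen, fun _ hacyl => ?_⟩
  obtain ⟨R, N, hRN⟩ := hacyl 1
  have hfar : R ≤ (horoball X).dist (1, N) (1, N + R) := by
    simpa using horoball_snd_le_add_dist (horoball_connected hsym hgen) (1, N) (1, N + R)
  obtain ⟨hfinite, hcard⟩ := hRN (1, N) (1, N + R) hfar
  refine absurd hcard (not_le.mpr ?_)
  calc N < 2 ^ N + 1 := Nat.lt_succ_of_lt N.lt_two_pow_self
    _ ≤ (wordBall X (2 ^ N)).ncard := add_one_le_ncard_wordBall hfin hsym hgen _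
    _ ≤ _ := Set.ncard_le_ncard (fun g hg => ?_) hfinite
  have hg' : wordLe X 1 (g * 1) (2 ^ N) := (mul_one g).symm ▸ hg
  exact ⟨horoball_dist_le_one hg' le_rfl, horoball_dist_le_one hg' (N.le_add_right R)⟩
end

section
/- Suppose a group G acts acylindrically on a hyperbolic geodesic metric space S, with acylindricity constants R(ε), N(ε). Fix x, y ∈ S with d(x,y) ≥ R(ε) for ε = C + 18δ + 1, where C > 0 is given. Let A(x) = {g ∈ G : d(x,gx) ≤ C} and suppose |A(x)| ≥ 2N(ε) + 1, where N(ε) is the bound from Lemma (strong acylindricity: at most N(ε) elements g satisfy d(x,gx) ≤ ε and d(y,gy) ≤ d(x,y) + ε). Then there exists a ∈ A(x) such that d(y, ay) ≥ d(x,y) + ε and d(x, tat⁻¹x) ≥ d(x,y) + ε, where t ∈ G is any fixed element with y = tx. -/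
open Bornology

/-!
Each of the two "bad" sets `{g | d(x, gx) ≤ ε, d(y, gy) ≤ d(x, y) + ε}` and
`{g | d(x, gx) ≤ ε, d(t⁻¹x, gt⁻¹x) ≤ d(x, t⁻¹x) + ε}` has at most `N` elements by strong
acylindricity (note `d(x, t⁻¹x) = d(tx, x) = d(x, y)`), so some of the `2N + 1` elements of
`A(x)` avoids both. Since `C ≤ ε`, that element moves `y` by more than `d(x, y) + ε`, and, as
`d(x, tat⁻¹x) = d(t⁻¹x, at⁻¹x)`, its conjugate by `t` moves `x` by more than `d(x, y) + ε`.
-/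

theorem Set.exists_mem_finset_notMem_union {α : Type*} (F : Finset α) {B₁ B₂ : Set α}
    (h₁ : B₁.Finite) (h₂ : B₂.Finite) (hcard : B₁.ncard + B₂.ncard < F.card) :
    ∃ a ∈ F, a ∉ B₁ ∧ a ∉ B₂ := by
  have hlt : (B₁ ∪ B₂).ncard < (F : Set α).ncard := by
    rw [Set.ncard_coe_finset]
    exact (Set.ncard_union_le B₁ B₂).trans_lt hcard
  obtain ⟨a, haF, ha⟩ := Set.exists_mem_notMem_of_ncard_lt_ncard hlt (h₁.union h₂)
  exact ⟨a, haF, not_or.mp ha⟩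

section IsometricAction

variable {G S : Type*} [Group G] [PseudoMetricSpace S] [MulAction G S] [IsIsometricSMul G S]

theorem dist_inv_smul_right (t : G) (x : S) : dist x (t⁻¹ • x) = dist (t • x) x := by
  rw [← dist_smul t x (t⁻¹ • x), smul_inv_smul]

theorem dist_conj_smul_right (t a : G) (x : S) :
    dist x ((t * a * t⁻¹) • x) = dist (t⁻¹ • x) (a • t⁻¹ • x) := by
  rw [← dist_smul t (t⁻¹ • x), smul_inv_smul, mul_smul, mul_smul]

end IsometricAction

theorem stmt_17_general {G S : Type*} [Group G] [MetricSpace S] [MulAction G S]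
    [IsIsometricSMul G S] (δ : ℝ) (hδ : 0 ≤ δ)
    (C ε : ℝ) (hε : ε = C + 18 * δ + 1)
    (R : ℝ) (N : ℕ)
    -- strong acylindricity constants for ε (Lemma 3.5 of the paper):
    (hstrong : ∀ u v : S, dist u v ≥ R →
      {g : G | dist u (g • u) ≤ ε ∧ dist v (g • v) ≤ dist u v + ε}.Finite ∧
      {g : G | dist u (g • u) ≤ ε ∧ dist v (g • v) ≤ dist u v + ε}.ncard ≤ N)
    (x y : S) (hxy : dist x y ≥ R)
    (t : G) (ht : y = t • x)
    -- |A(x)| ≥ 2N + 1 :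
    (F : Finset G) (hF : ∀ g ∈ F, dist x (g • x) ≤ C) (hFcard : 2 * N + 1 ≤ F.card) :
    ∃ a : G, dist x (a • x) ≤ C ∧
      dist y (a • y) ≥ dist x y + ε ∧
      dist x ((t * a * t⁻¹) • x) ≥ dist x y + ε := by
  have hCε : C ≤ ε := by linarith
  have hdist : dist x (t⁻¹ • x) = dist x y := by
    rw [dist_inv_smul_right, ht, dist_comm]
  obtain ⟨hfin₁, hcard₁⟩ := hstrong x y hxy
  obtain ⟨hfin₂, hcard₂⟩ := hstrong x (t⁻¹ • x) (hdist ▸ hxy)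
  obtain ⟨a, haF, ha₁, ha₂⟩ :=
    Set.exists_mem_finset_notMem_union F hfin₁ hfin₂ (by omega)
  have haε : dist x (a • x) ≤ ε := (hF a haF).trans hCε
  simp only [Set.mem_ofPred_eq, not_and, not_le, hdist] at ha₁ ha₂
  refine ⟨a, hF a haF, (ha₁ haε).le, ?_⟩
  rw [dist_conj_smul_right]
  exact (ha₂ haε).le

theorem stmt_17 {G S : Type*} [Group G] [MetricSpace S] [MulAction G S]
    [IsIsometricSMul G S] (δ : ℝ) (hδ : 0 ≤ δ)
    (hgeo : GeodesicMetricSpace S) (hhyp : RipsHyperbolic S δ)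
    (hacyl : AcylindricalAction G S)
    (C ε : ℝ) (hC : 0 < C) (hε : ε = C + 18 * δ + 1)
    (R : ℝ) (N : ℕ)
    -- strong acylindricity constants for ε (Lemma 3.5 of the paper):
    (hstrong : ∀ u v : S, dist u v ≥ R →
      {g : G | dist u (g • u) ≤ ε ∧ dist v (g • v) ≤ dist u v + ε}.Finite ∧
      {g : G | dist u (g • u) ≤ ε ∧ dist v (g • v) ≤ dist u v + ε}.ncard ≤ N)
    (x y : S) (hxy : dist x y ≥ R)
    (t : G) (ht : y = t • x)
    -- |A(x)| ≥ 2N + 1 :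
    (F : Finset G) (hF : ∀ g ∈ F, dist x (g • x) ≤ C) (hFcard : 2 * N + 1 ≤ F.card) :
    ∃ a : G, dist x (a • x) ≤ C ∧
      dist y (a • y) ≥ dist x y + ε ∧
      dist x ((t * a * t⁻¹) • x) ≥ dist x y + ε :=
  stmt_17_general δ hδ C ε hε R N hstrong x y hxy t ht F hF hFcard
end

section
/- Let (S,d) be a δ-hyperbolic geodesic metric space with δ ≥ 1, let x ∈ S, and let g ∈ G act by isometries on S. If 2·(g⁻¹x, gx)_x ≤ d(x,gx) − 19δ (Gromov product condition), then d(x, gⁿx) ≥ n for all n ∈ ℕ; in particular g is loxodromic. -/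
open Bornology

/-!
Write `xᵢ = gⁱ • x`. Consecutive points are `L = d(x, g • x)` apart and every Gromov product
`(xᵢ, xᵢ₊₂)_{xᵢ₊₁}` equals `P = (g⁻¹ • x, g • x)_x`, with `L ≥ 2P + 19δ`. By induction on `n`,
`(x₀, xₙ₊₁)_{xₙ} ≤ P + 3δ`: since `(xₙ₋₁, x₀)_{xₙ} = L - (x₀, xₙ)_{xₙ₋₁}` is large, the four-point
inequality `min((xₙ₋₁, x₀)_{xₙ}, (x₀, xₙ₊₁)_{xₙ}) - 3δ ≤ (xₙ₋₁, xₙ₊₁)_{xₙ} = P` forces the second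
product to be small. Hence `d(x₀, xₙ₊₁) = d(x₀, xₙ) + L - 2(x₀, xₙ₊₁)_{xₙ} ≥ d(x₀, xₙ) + 1`.
-/

section Gromov

variable {S : Type*} [MetricSpace S]

lemma gromov_nonneg (a b w : S) : 0 ≤ gromov a b w := by
  unfold gromov
  linarith [dist_triangle a w b, dist_comm w b]

lemma gromov_comm (a b w : S) : gromov a b w = gromov b a w := by
  unfold gromov
  rw [dist_comm a b]
  ring

lemma gromov_add_gromov (a b w : S) : gromov a b w + gromov b w a = dist a w := by
  unfold gromov
  rw [dist_comm b a, dist_comm w a]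
  ring

lemma gromov_smul {G : Type*} [Group G] [MulAction G S] [IsIsometricSMul G S]
    (g : G) (a b w : S) : gromov (g • a) (g • b) (g • w) = gromov a b w := by
  simp only [gromov, dist_smul]

end Gromov

namespace IsGeodesicSeg

variable {S : Type*} [MetricSpace S] {f : ℝ → S} {a b : S} {s : ℝ}

lemma dist_left_s19 (hf : IsGeodesicSeg f a b) (hs : s ∈ Set.Icc 0 (dist a b)) :
    dist a (f s) = s := by
  have h := hf.2.2 0 ⟨le_rfl, dist_nonneg⟩ s hs
  rw [hf.1, zero_sub, abs_neg, abs_of_nonneg hs.1] at h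
  exact h

lemma dist_right (hf : IsGeodesicSeg f a b) (hs : s ∈ Set.Icc 0 (dist a b)) :
    dist b (f s) = dist a b - s := by
  have h := hf.2.2 (dist a b) ⟨dist_nonneg, le_rfl⟩ s hs
  rw [hf.2.1, abs_of_nonneg (sub_nonneg.2 hs.2)] at h
  exact h

lemma gromov_le_dist (hf : IsGeodesicSeg f a b) (w : S) (hs : s ∈ Set.Icc 0 (dist a b)) :
    gromov a b w ≤ dist w (f s) := by
  unfold gromov
  linarith [hf.dist_left_s19 hs, hf.dist_right hs, dist_triangle a (f s) w,
    dist_triangle b (f s) w, dist_comm w (f s)]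

end IsGeodesicSeg

namespace RipsHyperbolic

variable {S : Type*} [MetricSpace S] {δ : ℝ}

lemma exists_dist_le_gromov_add (hhyp : RipsHyperbolic S δ) (hgeo : GeodesicMetricSpace S)
    {f : ℝ → S} {a c : S} (hf : IsGeodesicSeg f a c) (w : S) :
    ∃ s ∈ Set.Icc 0 (dist a c), dist w (f s) ≤ gromov a c w + 2 * δ := by
  obtain ⟨fcw, hcw⟩ := hgeo c w
  obtain ⟨faw, haw⟩ := hgeo a w
  -- the internal point of the tripod of the triangle `a c w` on the side `[a, c]`
  set s₀ := gromov c w a with hs₀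
  have hs₀_mem : s₀ ∈ Set.Icc 0 (dist a c) := by
    refine ⟨gromov_nonneg c w a, ?_⟩
    unfold gromov at hs₀
    linarith [dist_triangle w c a, dist_comm c a, dist_comm w c]
  refine ⟨s₀, hs₀_mem, ?_⟩
  have hfa := hf.dist_left_s19 hs₀_mem
  have hfc := hf.dist_right hs₀_mem
  unfold gromov at hs₀ ⊢
  rcases hhyp a c w f fcw faw hf hcw haw s₀ hs₀_mem with ⟨t, ht, hclose⟩ | ⟨t, ht, hclose⟩
  · linarith [hcw.dist_left_s19 ht, hcw.dist_right ht, dist_triangle c (fcw t) (f s₀),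
      dist_triangle w (fcw t) (f s₀), dist_comm (fcw t) (f s₀), dist_comm c a, dist_comm w a]
  · linarith [haw.dist_left_s19 ht, haw.dist_right ht, dist_triangle a (faw t) (f s₀),
      dist_triangle w (faw t) (f s₀), dist_comm (faw t) (f s₀), dist_comm c a, dist_comm w a,
      dist_comm w c]

lemma min_gromov_sub_le (hhyp : RipsHyperbolic S δ) (hgeo : GeodesicMetricSpace S)
    (a b c w : S) : min (gromov a b w) (gromov b c w) - 3 * δ ≤ gromov a c w := by
  obtain ⟨fac, hac⟩ := hgeo a c
  obtain ⟨fcb, hcb⟩ := hgeo c b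
  obtain ⟨fab, hab⟩ := hgeo a b
  obtain ⟨s, hs, hws⟩ := hhyp.exists_dist_le_gromov_add hgeo hac w
  rcases hhyp a c b fac fcb fab hac hcb hab s hs with ⟨t, ht, hclose⟩ | ⟨t, ht, hclose⟩
  · have hfar := hcb.gromov_le_dist w ht
    rw [gromov_comm] at hfar
    linarith [min_le_right (gromov a b w) (gromov b c w), dist_triangle w (fac s) (fcb t)]
  · have hfar := hab.gromov_le_dist w ht
    linarith [min_le_left (gromov a b w) (gromov b c w), dist_triangle w (fac s) (fab t)]

variable {p : ℕ → S} {P c : ℝ}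

lemma gromov_le_and_dist_succ (hhyp : RipsHyperbolic S δ) (hgeo : GeodesicMetricSpace S)
    (hδ : 0 ≤ δ) (hc : 0 < c) (hstep : ∀ i, 2 * P + 6 * δ + c ≤ dist (p i) (p (i + 1)))
    (hturn : ∀ i, gromov (p i) (p (i + 2)) (p (i + 1)) ≤ P) (n : ℕ) :
    gromov (p 0) (p (n + 1)) (p n) ≤ P + 3 * δ ∧ dist (p 0) (p n) + c ≤ dist (p 0) (p (n + 1)) := by
  induction n with
  | zero =>
    have hP := (gromov_nonneg _ _ _).trans (hturn 0)
    have h0 : gromov (p 0) (p 1) (p 0) = 0 := by simp [gromov, dist_comm]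
    refine ⟨by linarith, ?_⟩
    rw [dist_self]
    linarith [hstep 0]
  | succ n ih =>
    have hback : P + 3 * δ < gromov (p n) (p 0) (p (n + 1)) := by
      linarith [gromov_add_gromov (p n) (p 0) (p (n + 1)), hstep n, ih.1]
    have hmin := hhyp.min_gromov_sub_le hgeo (p n) (p 0) (p (n + 2)) (p (n + 1))
    have hfwd : gromov (p 0) (p (n + 2)) (p (n + 1)) ≤ P + 3 * δ := by
      rcases min_le_iff.1 (show min _ _ ≤ P + 3 * δ by linarith [hturn n]) with h | h
      · exact absurd h hback.not_ge
      · exact h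
    refine ⟨hfwd, ?_⟩
    unfold gromov at hfwd
    linarith [hstep (n + 1), ih.2, dist_comm (p (n + 2)) (p (n + 1))]

lemma mul_le_dist_of_gromov_le (hhyp : RipsHyperbolic S δ) (hgeo : GeodesicMetricSpace S)
    (hδ : 0 ≤ δ) (hc : 0 < c) (hstep : ∀ i, 2 * P + 6 * δ + c ≤ dist (p i) (p (i + 1)))
    (hturn : ∀ i, gromov (p i) (p (i + 2)) (p (i + 1)) ≤ P) (n : ℕ) :
    c * n ≤ dist (p 0) (p n) := by
  induction n with
  | zero => simp
  | succ n ih =>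
    push_cast
    linarith [(hhyp.gromov_le_and_dist_succ hgeo hδ hc hstep hturn n).2]

end RipsHyperbolic

section Orbit

variable {G S : Type*} [Group G] [MetricSpace S] [MulAction G S] [IsIsometricSMul G S]

lemma dist_pow_smul_succ (g : G) (x : S) (i : ℕ) :
    dist ((g ^ i) • x) ((g ^ (i + 1)) • x) = dist x (g • x) := by
  rw [pow_succ, mul_smul, dist_smul]

lemma gromov_pow_smul (g : G) (x : S) (i : ℕ) :
    gromov ((g ^ i) • x) ((g ^ (i + 2)) • x) ((g ^ (i + 1)) • x) = gromov (g⁻¹ • x) (g • x) x := by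
  have hprev : (g ^ i) • x = (g ^ (i + 1)) • (g⁻¹ • x) := by
    rw [← mul_smul, pow_succ, mul_inv_cancel_right]
  have hnext : (g ^ (i + 2)) • x = (g ^ (i + 1)) • (g • x) := by
    rw [← mul_smul, ← pow_succ]
  rw [hprev, hnext, gromov_smul]

end Orbit

theorem stmt_19 {G S : Type*} [Group G] [MetricSpace S] [MulAction G S]
    [IsIsometricSMul G S] (δ : ℝ) (hδ : 1 ≤ δ)
    (hgeo : GeodesicMetricSpace S) (hhyp : RipsHyperbolic S δ)
    (x : S) (g : G)
    (hprod : 2 * gromov (g⁻¹ • x) (g • x) x ≤ dist x (g • x) - 19 * δ) :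
    ∀ n : ℕ, dist x ((g ^ n) • x) ≥ (n : ℝ) := by
  intro n
  have hstep (i : ℕ) :
      2 * gromov (g⁻¹ • x) (g • x) x + 6 * δ + 1 ≤ dist ((g ^ i) • x) ((g ^ (i + 1)) • x) := by
    rw [dist_pow_smul_succ]
    linarith
  have h := hhyp.mul_le_dist_of_gromov_le hgeo (by linarith) one_pos hstep
    (fun i => (gromov_pow_smul g x i).le) n
  simpa using h
end
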